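/- Let γ be a simple closed convex curve in the Minkowski plane with dual-norm length L_Q, enclosed area A, and Minkowski median curvature k* (the supremum of all x such that k(θ) > x on some θ-interval of length π). Then k* ≤ C · L_Q / A, where C = q₀² · max_θ [p(θ), p'(θ)] and q₀ = max_θ |q(θ)| depends only on the unit ball 𝒫. -/

import Mathlib

open Real Set MeasureTheory

noncomputable section

def det2 (u v : ℝ × ℝ) : ℝ := u.1 * v.2 - u.2 * v.1

def er (θ : ℝ) : ℝ × ℝ := (Real.cos θ, Real.sin θ)

def eth (θ : ℝ) : ℝ × ℝ := (-Real.sin θ, Real.cos θ)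

lemma hasDerivAt_er (θ : ℝ) : HasDerivAt er (eth θ) θ :=
  (Real.hasDerivAt_cos θ).prodMk (Real.hasDerivAt_sin θ)

lemma hasDerivAt_eth (θ : ℝ) : HasDerivAt eth (-er θ) θ := by
  have h : HasDerivAt eth (-(Real.cos θ), -(Real.sin θ)) θ :=
    ((Real.hasDerivAt_sin θ).fun_neg).prodMk (Real.hasDerivAt_cos θ)
  simpa [er, Prod.neg_mk] using h

lemma hasDerivAt_fst' {f : ℝ → ℝ × ℝ} {f' : ℝ × ℝ} {x : ℝ} (h : HasDerivAt f f' x) :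
    HasDerivAt (fun t => (f t).1) f'.1 x := by
  have := (ContinuousLinearMap.fst ℝ ℝ ℝ).hasFDerivAt.comp_hasDerivAt x h
  exact this

lemma hasDerivAt_snd' {f : ℝ → ℝ × ℝ} {f' : ℝ × ℝ} {x : ℝ} (h : HasDerivAt f f' x) :
    HasDerivAt (fun t => (f t).2) f'.2 x := by
  have := (ContinuousLinearMap.snd ℝ ℝ ℝ).hasFDerivAt.comp_hasDerivAt x h
  exact this

lemma deriv2_differentiable (a : ℝ → ℝ) (ha : ContDiff ℝ (⊤ : ℕ∞) a) :
    Differentiable ℝ (deriv a) := by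
  have := ContDiff.differentiable_iteratedDeriv 1 ha (by exact_mod_cast WithTop.coe_lt_top 1)
  simpa [iteratedDeriv_one] using this

lemma deriv2_continuous (a : ℝ → ℝ) (ha : ContDiff ℝ (⊤ : ℕ∞) a) :
    Continuous (deriv (deriv a)) := by
  have := ContDiff.continuous_iteratedDeriv 2 ha (WithTop.coe_le_coe.mpr le_top)
  simpa [iteratedDeriv_succ, iteratedDeriv_one] using this

lemma p_hasDeriv (a : ℝ → ℝ) (ha : ContDiff ℝ (⊤ : ℕ∞) a) (p : ℝ → ℝ × ℝ)
    (hp : ∀ θ, p θ = a θ • er θ + deriv a θ • eth θ) (θ : ℝ) :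
    HasDerivAt p ((a θ + deriv (deriv a) θ) • eth θ) θ := by
  have hda : Differentiable ℝ a := ha.differentiable (by simp)
  have hda' : Differentiable ℝ (deriv a) := deriv2_differentiable a ha
  have h1 : HasDerivAt (fun θ => a θ • er θ) (deriv a θ • er θ + a θ • eth θ) θ := by
    have := ((hda θ).hasDerivAt).fun_smul (hasDerivAt_er θ)
    simpa [add_comm] using this
  have h2 : HasDerivAt (fun θ => deriv a θ • eth θ)
      (deriv (deriv a) θ • eth θ + deriv a θ • (-er θ)) θ := by
    have := ((hda' θ).hasDerivAt).fun_smul (hasDerivAt_eth θ)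
    simpa [add_comm] using this
  have h := h1.fun_add h2
  have hfun : p = fun θ => a θ • er θ + deriv a θ • eth θ := funext hp
  rw [hfun]
  refine h.congr_deriv ?_
  simp [smul_smul, add_smul, smul_neg]
  abel

lemma det2_p (a : ℝ → ℝ) (ha : ContDiff ℝ (⊤ : ℕ∞) a) (p : ℝ → ℝ × ℝ)
    (hp : ∀ θ, p θ = a θ • er θ + deriv a θ • eth θ) (θ : ℝ) :
    det2 (p θ) (deriv p θ) = a θ * (a θ + deriv (deriv a) θ) := by
  rw [(p_hasDeriv a ha p hp θ).deriv, hp θ]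
  simp only [det2, er, eth, Prod.smul_mk, Prod.mk_add_mk, Prod.fst, Prod.snd, smul_eq_mul]
  have h := Real.sin_sq_add_cos_sq θ
  linear_combination (a θ * (a θ + deriv (deriv a) θ)) * h

lemma q_eq (a : ℝ → ℝ) (ha : ContDiff ℝ (⊤ : ℕ∞) a)
    (hconv : ∀ θ, 0 < a θ + deriv (deriv a) θ) (p : ℝ → ℝ × ℝ)
    (hp : ∀ θ, p θ = a θ • er θ + deriv a θ • eth θ) (q : ℝ → ℝ × ℝ)
    (hq : ∀ θ, q θ = (det2 (p θ) (deriv p θ))⁻¹ • deriv p θ) (θ : ℝ) :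
    q θ = (a θ)⁻¹ • eth θ := by
  rw [hq θ, det2_p a ha p hp θ, (p_hasDeriv a ha p hp θ).deriv, smul_smul]
  rw [mul_inv, mul_assoc, inv_mul_cancel₀ (ne_of_gt (hconv θ))]
  simp

lemma periodic_deriv' (f : ℝ → ℝ) (c : ℝ) (hf : Function.Periodic f c) :
    Function.Periodic (deriv f) c := by
  intro x
  rw [← deriv_comp_add_const]
  congr 1
  funext y
  exact hf y

lemma periodic_le_sSup (f : ℝ → ℝ) (hf : Function.Periodic f (2 * π))
    (hbd : BddAbove (f '' Icc 0 (2 * π))) (θ : ℝ) :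
    f θ ≤ sSup (f '' Icc 0 (2 * π)) := by
  set ψ := toIcoMod Real.two_pi_pos 0 θ with hψ
  have hmem : ψ ∈ Ico 0 (0 + 2 * π) := toIcoMod_mem_Ico Real.two_pi_pos 0 θ
  have heq : f θ = f ψ := by
    have h1 : ψ = θ - toIcoDiv Real.two_pi_pos 0 θ • (2 * π) :=
      (self_sub_toIcoDiv_zsmul Real.two_pi_pos 0 θ).symm
    rw [h1, hf.sub_zsmul_eq]
  rw [heq]
  exact le_csSup hbd ⟨ψ, ⟨hmem.1, by have := hmem.2; linarith⟩, rfl⟩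

lemma keyMax (γ : ℝ → ℝ × ℝ) (b : ℝ → ℝ) (hbpos : ∀ θ, 0 < b θ)
    (hγd : ∀ θ, HasDerivAt γ (b θ • eth θ) θ)
    (hγper : Function.Periodic γ (2 * π)) (θ0 φ : ℝ) :
    ((γ (θ0 + π)).1 * cos θ0 + (γ (θ0 + π)).2 * sin θ0 ≤ (γ φ).1 * cos θ0 + (γ φ).2 * sin θ0)
    ∧ ((γ φ).1 * cos θ0 + (γ φ).2 * sin θ0 ≤ (γ θ0).1 * cos θ0 + (γ θ0).2 * sin θ0) := by
  set g : ℝ → ℝ := fun ψ => (γ ψ).1 * cos θ0 + (γ ψ).2 * sin θ0 with hgdef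
  have hg : ∀ ψ, HasDerivAt g (b ψ * Real.sin (θ0 - ψ)) ψ := by
    intro ψ
    have h1 : HasDerivAt (fun t => (γ t).1) (b ψ • eth ψ).1 ψ := hasDerivAt_fst' (hγd ψ)
    have h2 : HasDerivAt (fun t => (γ t).2) (b ψ • eth ψ).2 ψ := hasDerivAt_snd' (hγd ψ)
    have := (h1.mul_const (cos θ0)).fun_add (h2.mul_const (sin θ0))
    refine this.congr_deriv ?_
    simp [eth, Real.sin_sub, smul_eq_mul]
    ring
  have hgc : Continuous g := by
    have : Differentiable ℝ g := fun ψ => (hg ψ).differentiableAt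
    exact this.continuous
  have gper : Function.Periodic g (2 * π) := by
    intro x; simp [hgdef, hγper x]
  have hanti : AntitoneOn g (Icc θ0 (θ0 + π)) := by
    apply antitoneOn_of_deriv_nonpos (convex_Icc _ _) hgc.continuousOn
    · intro ψ hψ; exact (hg ψ).differentiableAt.differentiableWithinAt
    · intro ψ hψ
      rw [interior_Icc] at hψ
      rw [(hg ψ).deriv]
      have h1 : Real.sin (θ0 - ψ) ≤ 0 := by
        have h2 : 0 ≤ Real.sin (ψ - θ0) :=
          Real.sin_nonneg_of_nonneg_of_le_pi (by linarith [hψ.1]) (by linarith [hψ.2])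
        have h3 : θ0 - ψ = -(ψ - θ0) := by ring
        rw [h3, Real.sin_neg]; linarith
      exact mul_nonpos_of_nonneg_of_nonpos (le_of_lt (hbpos ψ)) h1
  have hmono : MonotoneOn g (Icc (θ0 - π) θ0) := by
    apply monotoneOn_of_deriv_nonneg (convex_Icc _ _) hgc.continuousOn
    · intro ψ hψ; exact (hg ψ).differentiableAt.differentiableWithinAt
    · intro ψ hψ
      rw [interior_Icc] at hψ
      rw [(hg ψ).deriv]
      have h1 : 0 ≤ Real.sin (θ0 - ψ) :=
        Real.sin_nonneg_of_nonneg_of_le_pi (by linarith [hψ.2]) (by linarith [hψ.1])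
      exact mul_nonneg (le_of_lt (hbpos ψ)) h1
  have hends : g (θ0 - π) = g (θ0 + π) := by
    have := gper (θ0 - π)
    rw [show θ0 - π + 2 * π = θ0 + π by ring] at this
    exact this.symm
  have hicc : ∀ ψ ∈ Icc (θ0 - π) (θ0 + π), g (θ0 + π) ≤ g ψ ∧ g ψ ≤ g θ0 := by
    intro ψ hψ
    rcases le_total ψ θ0 with h | h
    · constructor
      · rw [← hends]
        exact hmono (left_mem_Icc.mpr (by linarith [Real.pi_pos])) ⟨hψ.1, h⟩ hψ.1
      · exact hmono ⟨hψ.1, h⟩ (right_mem_Icc.mpr (by linarith [Real.pi_pos])) h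
    · constructor
      · exact hanti ⟨h, hψ.2⟩ (right_mem_Icc.mpr (by linarith [Real.pi_pos])) hψ.2
      · exact hanti (left_mem_Icc.mpr (by linarith [Real.pi_pos])) ⟨h, hψ.2⟩ h
  set ψ := toIcoMod Real.two_pi_pos (θ0 - π) φ with hψdef
  have hmem : ψ ∈ Ico (θ0 - π) (θ0 - π + 2 * π) := toIcoMod_mem_Ico Real.two_pi_pos (θ0 - π) φ
  have heq : g φ = g ψ := by
    have h1 : ψ = φ - toIcoDiv Real.two_pi_pos (θ0 - π) φ • (2 * π) :=
      (self_sub_toIcoDiv_zsmul Real.two_pi_pos (θ0 - π) φ).symm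
    rw [h1, gper.sub_zsmul_eq]
  have hmem' : ψ ∈ Icc (θ0 - π) (θ0 + π) :=
    ⟨hmem.1, by have := hmem.2; linarith⟩
  have h := hicc ψ hmem'
  have : g (θ0 + π) ≤ g φ ∧ g φ ≤ g θ0 := by rw [heq]; exact h
  exact this

lemma area_rep (γ : ℝ → ℝ × ℝ) (b : ℝ → ℝ) (hbcont : Continuous b)
    (hγd : ∀ θ, HasDerivAt γ (b θ • eth θ) θ) (hγper : Function.Periodic γ (2 * π))
    (θ0 β : ℝ) :
    ∫ θ in (0:ℝ)..2 * π, det2 (γ θ) (deriv γ θ) =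
      2 * ∫ θ in (0:ℝ)..2 * π,
        (((γ θ).1 * cos θ0 + (γ θ).2 * sin θ0) - β) * (b θ * Real.cos (θ - θ0)) := by
  have hγc : Continuous γ := by
    have : Differentiable ℝ γ := fun θ => (hγd θ).differentiableAt
    exact this.continuous
  set s : ℝ → ℝ := fun θ => (γ θ).1 * cos θ0 + (γ θ).2 * sin θ0 with hsdef
  set t : ℝ → ℝ := fun θ => -(γ θ).1 * sin θ0 + (γ θ).2 * cos θ0 with htdef
  have hs : ∀ θ, HasDerivAt s (b θ * Real.sin (θ0 - θ)) θ := by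
    intro θ
    have h1 := (hasDerivAt_fst' (hγd θ)).mul_const (cos θ0)
    have h2 := (hasDerivAt_snd' (hγd θ)).mul_const (sin θ0)
    have := h1.fun_add h2
    refine this.congr_deriv ?_
    simp [eth, Real.sin_sub, smul_eq_mul]; ring
  have ht : ∀ θ, HasDerivAt t (b θ * Real.cos (θ - θ0)) θ := by
    intro θ
    have h1 := ((hasDerivAt_fst' (hγd θ)).fun_neg.mul_const (sin θ0))
    have h2 := (hasDerivAt_snd' (hγd θ)).mul_const (cos θ0)
    have h3 := h1.fun_add h2
    have h4 : HasDerivAt t (-(b θ • eth θ).1 * sin θ0 + (b θ • eth θ).2 * cos θ0) θ := by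
      convert h3 using 1 <;> simp [htdef] <;> ring
    convert h4 using 1
    simp [eth, Real.cos_sub, smul_eq_mul]; ring
  have hscont : Continuous s := by fun_prop
  have htcont : Continuous t := by fun_prop
  have hscont' : Continuous (fun θ => b θ * Real.sin (θ0 - θ)) := by fun_prop
  have htcont' : Continuous (fun θ => b θ * Real.cos (θ - θ0)) := by fun_prop
  -- pointwise identity
  have hpt : ∀ θ, det2 (γ θ) (deriv γ θ) =
      2 * ((s θ - β) * (b θ * Real.cos (θ - θ0)))
        - ((b θ * Real.sin (θ0 - θ)) * t θ + s θ * (b θ * Real.cos (θ - θ0)))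
        + 2 * β * (b θ * Real.cos (θ - θ0)) := by
    intro θ
    rw [(hγd θ).deriv]
    simp only [det2, eth, hsdef, htdef, Prod.smul_mk, smul_eq_mul, Real.cos_sub, Real.sin_sub]
    have h := Real.sin_sq_add_cos_sq θ0
    linear_combination (-(b θ * ((γ θ).1 * Real.cos θ + (γ θ).2 * Real.sin θ))) * h
  have hint1 : IntervalIntegrable (fun θ => (s θ - β) * (b θ * Real.cos (θ - θ0)))
      volume 0 (2 * π) := (by apply Continuous.intervalIntegrable; fun_prop)
  have hint2 : IntervalIntegrable
      (fun θ => (b θ * Real.sin (θ0 - θ)) * t θ + s θ * (b θ * Real.cos (θ - θ0)))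
      volume 0 (2 * π) := (by apply Continuous.intervalIntegrable; fun_prop)
  have hint3 : IntervalIntegrable (fun θ => b θ * Real.cos (θ - θ0))
      volume 0 (2 * π) := (by apply Continuous.intervalIntegrable; fun_prop)
  have hzero1 : (∫ θ in (0:ℝ)..2 * π,
      ((b θ * Real.sin (θ0 - θ)) * t θ + s θ * (b θ * Real.cos (θ - θ0)))) = 0 := by
    have h := intervalIntegral.integral_eq_sub_of_hasDerivAt
      (f := fun θ => s θ * t θ)
      (f' := fun θ => (b θ * Real.sin (θ0 - θ)) * t θ + s θ * (b θ * Real.cos (θ - θ0)))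
      (fun x _ => (hs x).mul (ht x)) hint2
    rw [h]
    have hper : γ (2 * π) = γ 0 := by
      have := hγper 0; rw [zero_add] at this; exact this
    simp [hsdef, htdef, hper]
  have hzero2 : (∫ θ in (0:ℝ)..2 * π, b θ * Real.cos (θ - θ0)) = 0 := by
    have h := intervalIntegral.integral_eq_sub_of_hasDerivAt
      (f := t) (f' := fun θ => b θ * Real.cos (θ - θ0))
      (fun x _ => ht x) hint3
    rw [h]
    have hper : γ (2 * π) = γ 0 := by
      have := hγper 0; rw [zero_add] at this; exact this
    simp [htdef, hper]
  calc ∫ θ in (0:ℝ)..2 * π, det2 (γ θ) (deriv γ θ)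
      = ∫ θ in (0:ℝ)..2 * π,
          (2 * ((s θ - β) * (b θ * Real.cos (θ - θ0)))
          - ((b θ * Real.sin (θ0 - θ)) * t θ + s θ * (b θ * Real.cos (θ - θ0)))
          + 2 * β * (b θ * Real.cos (θ - θ0))) := by
        apply intervalIntegral.integral_congr
        intro θ _
        exact hpt θ
    _ = 2 * (∫ θ in (0:ℝ)..2 * π, (s θ - β) * (b θ * Real.cos (θ - θ0)))
          - (∫ θ in (0:ℝ)..2 * π,
            ((b θ * Real.sin (θ0 - θ)) * t θ + s θ * (b θ * Real.cos (θ - θ0))))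
          + 2 * β * (∫ θ in (0:ℝ)..2 * π, b θ * Real.cos (θ - θ0)) := by
        rw [intervalIntegral.integral_add ((hint1.const_mul 2).sub hint2) (hint3.const_mul (2*β)),
            intervalIntegral.integral_sub (hint1.const_mul 2) hint2,
            intervalIntegral.integral_const_mul, intervalIntegral.integral_const_mul]
    _ = 2 * ∫ θ in (0:ℝ)..2 * π, (s θ - β) * (b θ * Real.cos (θ - θ0)) := by
        rw [hzero1, hzero2]; ring

lemma area_rep2 (γ : ℝ → ℝ × ℝ) (b : ℝ → ℝ) (hbcont : Continuous b)
    (hγd : ∀ θ, HasDerivAt γ (b θ • eth θ) θ) (hγper : Function.Periodic γ (2 * π))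
    (c : ℝ × ℝ) :
    ∫ θ in (0:ℝ)..2 * π, det2 (γ θ) (deriv γ θ) =
      ∫ θ in (0:ℝ)..2 * π,
        b θ * (((γ θ).1 - c.1) * Real.cos θ + ((γ θ).2 - c.2) * Real.sin θ) := by
  have hγc : Continuous γ := by
    have : Differentiable ℝ γ := fun θ => (hγd θ).differentiableAt
    exact this.continuous
  have hint1 : IntervalIntegrable
      (fun θ => b θ * (((γ θ).1 - c.1) * Real.cos θ + ((γ θ).2 - c.2) * Real.sin θ))
      volume 0 (2 * π) := (by apply Continuous.intervalIntegrable; fun_prop)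
  have hint2 : IntervalIntegrable
      (fun θ => c.1 * (b θ * Real.cos θ) - c.2 * (b θ * (-Real.sin θ)))
      volume 0 (2 * π) := (by apply Continuous.intervalIntegrable; fun_prop)
  have hzero : (∫ θ in (0:ℝ)..2 * π,
      (c.1 * (b θ * Real.cos θ) - c.2 * (b θ * (-Real.sin θ)))) = 0 := by
    have h := intervalIntegral.integral_eq_sub_of_hasDerivAt
      (f := fun θ => c.1 * (γ θ).2 - c.2 * (γ θ).1)
      (f' := fun θ => c.1 * (b θ * Real.cos θ) - c.2 * (b θ * (-Real.sin θ)))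
      (fun x _ => by
        have h1 := (hasDerivAt_snd' (hγd x)).const_mul c.1
        have h2 := (hasDerivAt_fst' (hγd x)).const_mul c.2
        simpa [eth, smul_eq_mul] using h1.fun_sub h2) hint2
    rw [h]
    have hper : γ (2 * π) = γ 0 := by
      have := hγper 0; rw [zero_add] at this; exact this
    simp [hper]
  have hpt : ∀ θ, det2 (γ θ) (deriv γ θ) =
      b θ * (((γ θ).1 - c.1) * Real.cos θ + ((γ θ).2 - c.2) * Real.sin θ)
      + (c.1 * (b θ * Real.cos θ) - c.2 * (b θ * (-Real.sin θ))) := by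
    intro θ
    rw [(hγd θ).deriv]
    simp only [det2, eth, Prod.smul_mk, smul_eq_mul]
    ring
  calc ∫ θ in (0:ℝ)..2 * π, det2 (γ θ) (deriv γ θ)
      = ∫ θ in (0:ℝ)..2 * π,
          (b θ * (((γ θ).1 - c.1) * Real.cos θ + ((γ θ).2 - c.2) * Real.sin θ)
          + (c.1 * (b θ * Real.cos θ) - c.2 * (b θ * (-Real.sin θ)))) := by
        apply intervalIntegral.integral_congr
        intro θ _; exact hpt θ
    _ = (∫ θ in (0:ℝ)..2 * π,
          b θ * (((γ θ).1 - c.1) * Real.cos θ + ((γ θ).2 - c.2) * Real.sin θ))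
        + ∫ θ in (0:ℝ)..2 * π,
          (c.1 * (b θ * Real.cos θ) - c.2 * (b θ * (-Real.sin θ))) := by
        rw [intervalIntegral.integral_add hint1 hint2]
    _ = _ := by rw [hzero]; ring

set_option maxHeartbeats 1000000 in
/-- The median Minkowski curvature is bounded by `C · L_Q / A` with a constant
depending only on the unit ball. -/
theorem stmt17 (a : ℝ → ℝ) (ha : ContDiff ℝ (⊤ : ℕ∞) a) (haper : Function.Periodic a (2 * π))
    (hapos : ∀ θ, 0 < a θ) (hconv : ∀ θ, 0 < a θ + deriv (deriv a) θ)
    (p : ℝ → ℝ × ℝ) (hp : ∀ θ, p θ = a θ • er θ + deriv a θ • eth θ)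
    (q : ℝ → ℝ × ℝ) (hq : ∀ θ, q θ = (det2 (p θ) (deriv p θ))⁻¹ • deriv p θ)
    (hasym : ∀ θ, a (θ + π) = a θ)
    (γ : ℝ → ℝ × ℝ) (hγ : ContDiff ℝ (⊤ : ℕ∞) γ) (hγper : Function.Periodic γ (2 * π))
    (lam : ℝ → ℝ) (hlam : ∀ θ, 0 < lam θ) (hγd : ∀ θ, deriv γ θ = lam θ • q θ)
    (hsimple : Set.InjOn γ (Set.Ico 0 (2 * π)))
    (k : ℝ → ℝ) (hk : ∀ θ, k θ = det2 (p θ) (deriv p θ) / lam θ)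
    (LQ : ℝ) (hLQ : LQ = ∫ θ in (0:ℝ)..2 * π, lam θ)
    (A : ℝ) (hA : A = (1 / 2) * ∫ θ in (0:ℝ)..2 * π, det2 (γ θ) (deriv γ θ))
    (kstar : ℝ)
    (hkstar : kstar = sSup {x : ℝ | ∃ θ0 : ℝ, ∀ θ ∈ Set.Ioo θ0 (θ0 + π), x < k θ})
    (q0 : ℝ) (hq0 : q0 = sSup ((fun θ => Real.sqrt ((q θ).1 ^ 2 + (q θ).2 ^ 2)) '' Set.Icc 0 (2 * π)))
    (C : ℝ) (hC : C = q0 ^ 2 * sSup ((fun θ => det2 (p θ) (deriv p θ)) '' Set.Icc 0 (2 * π))) :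
    kstar ≤ C * LQ / A := by
  have hπ := Real.pi_pos
  have h2π := Real.two_pi_pos
  have hq' : ∀ θ, q θ = (a θ)⁻¹ • eth θ := q_eq a ha hconv p hp q hq
  have hdet : ∀ θ, det2 (p θ) (deriv p θ) = a θ * (a θ + deriv (deriv a) θ) := det2_p a ha p hp
  have hγdiff : Differentiable ℝ γ := hγ.differentiable (by simp)
  set b : ℝ → ℝ := fun θ => lam θ / a θ with hbdef
  have hbpos : ∀ θ, 0 < b θ := fun θ => div_pos (hlam θ) (hapos θ)
  have hderiv_eq : ∀ θ, deriv γ θ = b θ • eth θ := by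
    intro θ
    rw [hγd θ, hq' θ, smul_smul]
    congr 1
  have hγd' : ∀ θ, HasDerivAt γ (b θ • eth θ) θ := fun θ =>
    hderiv_eq θ ▸ (hγdiff θ).hasDerivAt
  have hacont : Continuous a := ha.continuous
  have ha2cont : Continuous (fun θ => deriv (deriv a) θ) := deriv2_continuous a ha
  have hγ'cont : Continuous (deriv γ) := hγ.continuous_deriv (by simp)
  have hbcont : Continuous b := by
    have hb2 : b = fun θ => (-(Real.sin θ)) * (deriv γ θ).1 + Real.cos θ * (deriv γ θ).2 := by
      funext θ
      rw [hderiv_eq θ]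
      simp only [eth, Prod.smul_mk, smul_eq_mul]
      have h := Real.sin_sq_add_cos_sq θ
      linear_combination (-(b θ)) * h
    rw [hb2]; fun_prop
  have hlamcont : Continuous lam := by
    have hl2 : lam = fun θ => a θ * b θ := funext fun θ => by
      rw [hbdef]
      field_simp
      rw [eq_div_iff (hapos θ).ne']
    rw [hl2]; exact hacont.mul hbcont
  have hlamint : IntervalIntegrable lam volume 0 (2 * π) := hlamcont.intervalIntegrable 0 (2 * π)
  -- q0 facts
  have hainv_cont : Continuous (fun θ => (a θ)⁻¹) := hacont.inv₀ fun θ => (hapos θ).ne'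
  have hq0' : q0 = sSup ((fun θ => (a θ)⁻¹) '' Icc 0 (2 * π)) := by
    rw [hq0]
    congr 1
    apply Set.image_congr
    intro θ _
    rw [hq' θ]
    simp only [eth, Prod.smul_mk, smul_eq_mul]
    have h1 : ((a θ)⁻¹ * -Real.sin θ) ^ 2 + ((a θ)⁻¹ * Real.cos θ) ^ 2 = ((a θ)⁻¹) ^ 2 := by
      have h := Real.sin_sq_add_cos_sq θ
      linear_combination (((a θ)⁻¹) ^ 2) * h
    rw [h1, Real.sqrt_sq (inv_nonneg.mpr (hapos θ).le)]
  have hbdd : BddAbove ((fun θ => (a θ)⁻¹) '' Icc 0 (2 * π)) :=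
    (isCompact_Icc.image hainv_cont).bddAbove
  have hainper : Function.Periodic (fun θ => (a θ)⁻¹) (2 * π) := fun x => by simp [haper x]
  have hq0ge : ∀ θ, (a θ)⁻¹ ≤ q0 := fun θ => by
    rw [hq0']; exact periodic_le_sSup _ hainper hbdd θ
  have hq0pos : 0 < q0 := lt_of_lt_of_le (inv_pos.mpr (hapos 0)) (hq0ge 0)
  -- M facts
  set M := sSup ((fun θ => det2 (p θ) (deriv p θ)) '' Set.Icc 0 (2 * π)) with hMdef
  have himg2 : (fun θ => det2 (p θ) (deriv p θ)) '' Icc 0 (2 * π)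
      = (fun θ => a θ * (a θ + deriv (deriv a) θ)) '' Icc 0 (2 * π) :=
    Set.image_congr fun θ _ => hdet θ
  have haacont : Continuous (fun θ => a θ * (a θ + deriv (deriv a) θ)) := by fun_prop
  have hMbdd : BddAbove ((fun θ => a θ * (a θ + deriv (deriv a) θ)) '' Icc 0 (2 * π)) :=
    (isCompact_Icc.image haacont).bddAbove
  have haaper : Function.Periodic (fun θ => a θ * (a θ + deriv (deriv a) θ)) (2 * π) := by
    have h1 : Function.Periodic (deriv a) (2 * π) := periodic_deriv' a _ haper
    have h2 : Function.Periodic (deriv (deriv a)) (2 * π) := periodic_deriv' (deriv a) _ h1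
    intro x; simp [haper x, h2 x]
  have hMge : ∀ θ, a θ * (a θ + deriv (deriv a) θ) ≤ M := fun θ => by
    rw [hMdef, himg2]; exact periodic_le_sSup _ haaper hMbdd θ
  have hMpos : 0 < M := lt_of_lt_of_le (mul_pos (hapos 0) (hconv 0)) (hMge 0)
  have hCval : C = q0 ^ 2 * M := hC
  have hCpos : 0 < C := by rw [hCval]; positivity
  have hside : ∀ φ, a φ + deriv (deriv a) φ ≤ q0 * M := by
    intro φ
    have h1 : (a φ)⁻¹ * (a φ * (a φ + deriv (deriv a) φ)) = a φ + deriv (deriv a) φ :=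
      inv_mul_cancel_left₀ (hapos φ).ne' _
    rw [← h1]
    exact mul_le_mul (hq0ge φ) (hMge φ)
      (mul_pos (hapos φ) (hconv φ)).le hq0pos.le
  have hLQnn : 0 ≤ LQ := by
    rw [hLQ]
    exact intervalIntegral.integral_nonneg h2π.le fun θ _ => (hlam θ).le
  -- A > 0
  have hApos : 0 < A := by
    have hne : γ 0 ≠ γ π := by
      intro hcontra
      have h0 : (0:ℝ) ∈ Ico 0 (2 * π) := ⟨le_refl 0, h2π⟩
      have hπm : π ∈ Ico 0 (2 * π) := ⟨hπ.le, by linarith⟩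
      have := hsimple h0 hπm hcontra
      exact hπ.ne this
    set d1 : ℝ := (γ 0).1 - (γ π).1 with hd1def
    set d2 : ℝ := (γ 0).2 - (γ π).2 with hd2def
    have hdpos : 0 < d1 ^ 2 + d2 ^ 2 := by
      rcases (lt_or_eq_of_le (by positivity : (0:ℝ) ≤ d1 ^ 2 + d2 ^ 2)) with h | h
      · exact h
      · exfalso
        have hd1 : d1 = 0 := by nlinarith
        have hd2 : d2 = 0 := by nlinarith
        apply hne
        have e1 : (γ 0).1 = (γ π).1 := by rw [hd1def] at hd1; linarith
        have e2 : (γ 0).2 = (γ π).2 := by rw [hd2def] at hd2; linarith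
        exact Prod.ext e1 e2
    set c : ℝ × ℝ := (((γ 0).1 + (γ π).1) / 2, ((γ 0).2 + (γ π).2) / 2) with hcdef
    set hfun : ℝ → ℝ := fun θ => ((γ θ).1 - c.1) * Real.cos θ + ((γ θ).2 - c.2) * Real.sin θ
      with hfundef
    have hX : ∀ θ, |d1 * Real.cos θ + d2 * Real.sin θ| ≤ 2 * hfun θ := by
      intro θ
      have hu := (keyMax γ b hbpos hγd' hγper θ 0).2
      have hv := (keyMax γ b hbpos hγd' hγper θ π).2
      rw [abs_le]
      constructor
      · simp only [hfundef, hcdef, hd1def, hd2def]; linarith [hu, hv]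
      · simp only [hfundef, hcdef, hd1def, hd2def]; linarith [hu, hv]
    have hhnn : ∀ θ, 0 ≤ hfun θ := fun θ => by
      have h1 := le_trans (abs_nonneg _) (hX θ); linarith
    have hγcont : Continuous γ := hγdiff.continuous
    have hfcont : Continuous hfun := by
      rw [hfundef]; fun_prop
    obtain ⟨θm, hθmmem, hθmmin⟩ :=
      isCompact_Icc.exists_isMinOn (s := Icc (0:ℝ) (2*π)) ⟨0, le_refl 0, h2π.le⟩
        hbcont.continuousOn
    set m := b θm with hmdef
    have hmpos : 0 < m := hbpos θm
    have hbm : ∀ θ ∈ Icc (0:ℝ) (2*π), m ≤ b θ := fun θ hθ => hθmmin hθ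
    set D := |d1| + |d2| with hDdef
    have hDpos : 0 < D := by
      rw [hDdef]
      nlinarith [abs_nonneg d1, abs_nonneg d2, sq_abs d1, sq_abs d2, hdpos]
    have hpw : ∀ θ ∈ Icc (0:ℝ) (2*π),
        (m/(2*D)) * ((d1 * Real.cos θ + d2 * Real.sin θ)^2) ≤ b θ * hfun θ := by
      intro θ hθ
      have h1 := hX θ
      have habs : |d1 * Real.cos θ + d2 * Real.sin θ| ≤ D := by
        calc |d1 * Real.cos θ + d2 * Real.sin θ|
            ≤ |d1 * Real.cos θ| + |d2 * Real.sin θ| := abs_add_le _ _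
          _ ≤ D := by
              rw [hDdef, abs_mul, abs_mul]
              have hc := Real.abs_cos_le_one θ
              have hs := Real.abs_sin_le_one θ
              nlinarith [abs_nonneg d1, abs_nonneg d2]
      have hsq : (d1 * Real.cos θ + d2 * Real.sin θ)^2
          ≤ D * |d1 * Real.cos θ + d2 * Real.sin θ| := by
        rw [← sq_abs, sq]
        exact mul_le_mul_of_nonneg_right habs (abs_nonneg _)
      have e1 : (m/(2*D)) * ((d1 * Real.cos θ + d2 * Real.sin θ)^2)
          ≤ (m/(2*D)) * (D * |d1 * Real.cos θ + d2 * Real.sin θ|) :=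
        mul_le_mul_of_nonneg_left hsq (by positivity)
      have e2 : (m/(2*D)) * (D * |d1 * Real.cos θ + d2 * Real.sin θ|)
          = (m/2) * |d1 * Real.cos θ + d2 * Real.sin θ| := by
        field_simp
      have e3 : (m/2) * |d1 * Real.cos θ + d2 * Real.sin θ| ≤ (m/2) * (2 * hfun θ) :=
        mul_le_mul_of_nonneg_left h1 (by positivity)
      have e5 : m * hfun θ ≤ b θ * hfun θ := mul_le_mul_of_nonneg_right (hbm θ hθ) (hhnn θ)
      calc (m/(2*D)) * ((d1 * Real.cos θ + d2 * Real.sin θ)^2)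
          ≤ (m/(2*D)) * (D * |d1 * Real.cos θ + d2 * Real.sin θ|) := e1
        _ = (m/2) * |d1 * Real.cos θ + d2 * Real.sin θ| := e2
        _ ≤ (m/2) * (2 * hfun θ) := e3
        _ = m * hfun θ := by ring
        _ ≤ b θ * hfun θ := e5
    have hXint : (∫ θ in (0:ℝ)..2*π, (d1 * Real.cos θ + d2 * Real.sin θ)^2)
        = (d1^2 + d2^2) * π := by
      have e : (fun θ => (d1 * Real.cos θ + d2 * Real.sin θ)^2)
          = fun θ => (d1^2) * Real.cos θ^2
              + ((2*d1*d2) * (Real.sin θ * Real.cos θ) + (d2^2) * Real.sin θ^2) := by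
        funext θ; ring
      rw [e]
      rw [intervalIntegral.integral_add (by apply Continuous.intervalIntegrable; fun_prop)
        (by apply Continuous.intervalIntegrable; fun_prop)]
      rw [intervalIntegral.integral_add (by apply Continuous.intervalIntegrable; fun_prop)
        (by apply Continuous.intervalIntegrable; fun_prop)]
      rw [intervalIntegral.integral_const_mul, intervalIntegral.integral_const_mul,
        intervalIntegral.integral_const_mul]
      rw [integral_cos_sq, integral_sin_sq, integral_sin_mul_cos₁]
      simp [Real.sin_two_pi, Real.cos_two_pi]
      ring
    have hrep := area_rep2 γ b hbcont hγd' hγper c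
    have hAeq : A = (1/2) * ∫ θ in (0:ℝ)..2*π, b θ * hfun θ := by
      rw [hA, hrep]
    have hmono : (∫ θ in (0:ℝ)..2*π, (m/(2*D)) * ((d1 * Real.cos θ + d2 * Real.sin θ)^2))
        ≤ ∫ θ in (0:ℝ)..2*π, b θ * hfun θ :=
      intervalIntegral.integral_mono_on h2π.le
        (by apply Continuous.intervalIntegrable; fun_prop)
        (by apply Continuous.intervalIntegrable; exact hbcont.mul hfcont) hpw
    have hlhs : (∫ θ in (0:ℝ)..2*π, (m/(2*D)) * ((d1 * Real.cos θ + d2 * Real.sin θ)^2))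
        = (m/(2*D)) * ((d1^2 + d2^2) * π) := by
      rw [intervalIntegral.integral_const_mul, hXint]
    have hpos : 0 < (1/2) * ((m/(2*D)) * ((d1^2 + d2^2) * π)) := by positivity
    rw [hAeq]
    rw [hlhs] at hmono
    linarith
  -- final argument via csSup_le
  rw [hkstar]
  apply csSup_le
  · -- nonemptiness of the set
    have hkcont : Continuous k := by
      have hkeq : k = fun θ => (a θ * (a θ + deriv (deriv a) θ)) / lam θ :=
        funext fun θ => by rw [hk θ, hdet θ]
      rw [hkeq]
      exact (hacont.mul (hacont.add ha2cont)).div hlamcont fun θ => (hlam θ).ne'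
    obtain ⟨θk, hθkmem, hθkmin⟩ :=
      isCompact_Icc.exists_isMinOn (s := Icc (0:ℝ) π) ⟨0, le_refl 0, hπ.le⟩
        hkcont.continuousOn
    refine ⟨k θk - 1, 0, fun θ hθ => ?_⟩
    have h1 : θ ∈ Icc (0:ℝ) π := by
      constructor
      · exact hθ.1.le
      · have := hθ.2; rw [zero_add] at this; exact this.le
    have h2 : k θk ≤ k θ := hθkmin h1
    linarith
  · intro x hx
    obtain ⟨θ0, hθ0⟩ := hx
    rcases le_or_gt x 0 with hx0 | hx0
    · exact le_trans hx0 (div_nonneg (mul_nonneg hCpos.le hLQnn) hApos.le)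
    -- main case : x > 0
    obtain ⟨s, hsdef⟩ : ∃ s : ℝ → ℝ, s = fun θ => (γ θ).1 * Real.cos θ0 + (γ θ).2 * Real.sin θ0 :=
      ⟨_, rfl⟩
    have hkey : ∀ φ, s (θ0+π) ≤ s φ ∧ s φ ≤ s θ0 := fun φ => by
      rw [hsdef]; exact keyMax γ b hbpos hγd' hγper θ0 φ
    obtain ⟨β, hβdef⟩ : ∃ β : ℝ, β = (s θ0 + s (θ0+π))/2 := ⟨_, rfl⟩
    obtain ⟨w0, hw0def⟩ : ∃ w0 : ℝ, w0 = s θ0 - s (θ0+π) := ⟨_, rfl⟩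
    have hw0nn : 0 ≤ w0 := by have := (hkey θ0).1; rw [hw0def]; linarith
    have hγcont : Continuous γ := hγdiff.continuous
    have hscont : Continuous s := by rw [hsdef]; fun_prop
    have hArep : A = ∫ θ in (0:ℝ)..2*π, (s θ - β) * (b θ * Real.cos (θ - θ0)) := by
      rw [hA, area_rep γ b hbcont hγd' hγper θ0 β, hsdef]; ring
    have hble : ∀ θ, b θ ≤ q0 * lam θ := fun θ => by
      rw [hbdef]
      calc lam θ / a θ = lam θ * (a θ)⁻¹ := div_eq_mul_inv _ _
        _ ≤ lam θ * q0 := mul_le_mul_of_nonneg_left (hq0ge θ) (hlam θ).le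
        _ = q0 * lam θ := mul_comm _ _
    have hptb : ∀ θ ∈ Icc (0:ℝ) (2*π),
        (s θ - β) * (b θ * Real.cos (θ - θ0)) ≤ (w0/2) * (q0 * lam θ) := by
      intro θ _
      have h1 : |s θ - β| ≤ w0/2 := by
        have hk1 := (hkey θ).1
        have hk2 := (hkey θ).2
        rw [abs_le, hβdef, hw0def]
        constructor <;> linarith
      have h2 : |b θ * Real.cos (θ - θ0)| ≤ b θ := by
        rw [abs_mul, abs_of_pos (hbpos θ)]
        calc b θ * |Real.cos (θ - θ0)| ≤ b θ * 1 :=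
              mul_le_mul_of_nonneg_left (Real.abs_cos_le_one _) (hbpos θ).le
          _ = b θ := mul_one _
      calc (s θ - β) * (b θ * Real.cos (θ - θ0))
          ≤ |(s θ - β) * (b θ * Real.cos (θ - θ0))| := le_abs_self _
        _ = |s θ - β| * |b θ * Real.cos (θ - θ0)| := abs_mul _ _
        _ ≤ (w0/2) * b θ := mul_le_mul h1 h2 (abs_nonneg _) (by linarith)
        _ ≤ (w0/2) * (q0 * lam θ) := mul_le_mul_of_nonneg_left (hble θ) (by linarith)
    have hAle : A ≤ (w0/2) * (q0 * LQ) := by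
      rw [hArep, hLQ]
      calc (∫ θ in (0:ℝ)..2*π, (s θ - β) * (b θ * Real.cos (θ - θ0)))
          ≤ ∫ θ in (0:ℝ)..2*π, (w0/2) * (q0 * lam θ) :=
            intervalIntegral.integral_mono_on h2π.le
              (by apply Continuous.intervalIntegrable; fun_prop)
              (by apply Continuous.intervalIntegrable; exact
                continuous_const.mul (continuous_const.mul hlamcont)) hptb
        _ = (w0/2) * (q0 * ∫ θ in (0:ℝ)..2*π, lam θ) := by
            rw [intervalIntegral.integral_const_mul, intervalIntegral.integral_const_mul]
    have hs' : ∀ φ, HasDerivAt s (b φ * Real.sin (θ0 - φ)) φ := by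
      intro φ
      have h1 := (hasDerivAt_fst' (hγd' φ)).mul_const (Real.cos θ0)
      have h2 := (hasDerivAt_snd' (hγd' φ)).mul_const (Real.sin θ0)
      have h3 := h1.fun_add h2
      rw [hsdef]; refine h3.congr_deriv ?_
      simp [eth, Real.sin_sub, smul_eq_mul]; ring
    have hw0eq : w0 = ∫ φ in θ0..θ0+π, b φ * Real.sin (φ - θ0) := by
      have h := intervalIntegral.integral_eq_sub_of_hasDerivAt
        (a := θ0) (b := θ0 + π) (f := s) (f' := fun φ => b φ * Real.sin (θ0 - φ))
        (fun ψ _ => hs' ψ) (by apply Continuous.intervalIntegrable; fun_prop)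
      have h2 : (∫ φ in θ0..θ0+π, b φ * Real.sin (φ - θ0))
          = - ∫ φ in θ0..θ0+π, b φ * Real.sin (θ0 - φ) := by
        rw [← intervalIntegral.integral_neg]
        apply intervalIntegral.integral_congr
        intro φ _
        show b φ * Real.sin (φ - θ0) = -(b φ * Real.sin (θ0 - φ))
        have hneg : Real.sin (φ - θ0) = -Real.sin (θ0 - φ) := by
          rw [show φ - θ0 = -(θ0 - φ) by ring, Real.sin_neg]
        rw [hneg]; ring
      rw [h2, h, hw0def]; ring
    have hcomp : ∀ φ ∈ Icc θ0 (θ0+π),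
        b φ * Real.sin (φ - θ0) ≤ (q0*M/x) * Real.sin (φ - θ0) := by
      intro φ hφ
      have hsin : 0 ≤ Real.sin (φ - θ0) :=
        Real.sin_nonneg_of_nonneg_of_le_pi (by linarith [hφ.1]) (by linarith [hφ.2])
      rcases eq_or_lt_of_le hφ.1 with he1 | hl1
      · rw [← he1, sub_self, Real.sin_zero]; simp
      rcases eq_or_lt_of_le hφ.2 with he2 | hl2
      · rw [he2, show θ0 + π - θ0 = π by ring, Real.sin_pi]; simp
      have hkφ := hθ0 φ ⟨hl1, hl2⟩
      rw [hk φ, hdet φ] at hkφ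
      have hb : b φ ≤ q0*M/x := by
        have h1 : x * lam φ < a φ * (a φ + deriv (deriv a) φ) := by
          rw [lt_div_iff₀ (hlam φ)] at hkφ; linarith
        have h2 : b φ < (a φ + deriv (deriv a) φ)/x := by
          rw [hbdef, div_lt_div_iff₀ (hapos φ) hx0]
          nlinarith [h1]
        have h3 : (a φ + deriv (deriv a) φ)/x ≤ q0*M/x :=
          (div_le_div_iff_of_pos_right hx0).mpr (hside φ)
        linarith
      exact mul_le_mul_of_nonneg_right hb hsin
    have hsin2 : (∫ φ in θ0..θ0+π, Real.sin (φ - θ0)) = 2 := by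
      rw [intervalIntegral.integral_comp_sub_right (fun ψ => Real.sin ψ) θ0]
      rw [sub_self, show θ0 + π - θ0 = π by ring, integral_sin]
      norm_num
    have hw0le : w0 ≤ q0*M/x*2 := by
      rw [hw0eq]
      calc (∫ φ in θ0..θ0+π, b φ * Real.sin (φ - θ0))
          ≤ ∫ φ in θ0..θ0+π, (q0*M/x) * Real.sin (φ - θ0) :=
            intervalIntegral.integral_mono_on (by linarith)
              (by apply Continuous.intervalIntegrable; fun_prop)
              (by apply Continuous.intervalIntegrable; fun_prop) hcomp
        _ = (q0*M/x) * ∫ φ in θ0..θ0+π, Real.sin (φ - θ0) :=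
            intervalIntegral.integral_const_mul _ _
        _ = q0*M/x*2 := by rw [hsin2]
    have hfin : x * A ≤ C * LQ := by
      have h1 : x*A ≤ x*((w0/2)*(q0*LQ)) := mul_le_mul_of_nonneg_left hAle hx0.le
      have h2 : (w0/2)*(q0*LQ) ≤ (q0*M/x)*(q0*LQ) :=
        mul_le_mul_of_nonneg_right (by linarith) (mul_nonneg hq0pos.le hLQnn)
      have h4 : x*((w0/2)*(q0*LQ)) ≤ x*((q0*M/x)*(q0*LQ)) :=
        mul_le_mul_of_nonneg_left h2 hx0.le
      have h3 : x*((q0*M/x)*(q0*LQ)) = C*LQ := by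
        rw [hCval]; field_simp
      linarith
    rw [le_div_iff₀ hApos]
    linarith



end
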